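/- For every positive integer q, (λ(q)·K(q)·ψ(q))/q² = (ζ(2)/ζ(4))·Σ_{n=1}^∞ (λ(n)/n²)·c_q(n). -/

import Mathlib

open Finset Filter Topology

/-- The Ramanujan sum. -/
noncomputable def ramanujanSum (q n : ℕ) : ℤ :=
  ∑ d ∈ (Nat.gcd q n).divisors, ArithmeticFunction.moebius (q / d) * d

/-- The Liouville function `λ(n) = (-1)^Ω(n)`. -/
noncomputable def liouville (n : ℕ) : ℤ := (-1) ^ (ArithmeticFunction.cardFactors n)

/-- The radical `K(n) = ∏_{p ∣ n} p`. -/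
def rad (n : ℕ) : ℕ := ∏ p ∈ n.primeFactors, p

/-- The Dedekind psi function `ψ(q) = q ∏_{p ∣ q} (1 + 1/p)`. -/
noncomputable def dedekindPsi (q : ℕ) : ℝ :=
  (q : ℝ) * ∏ p ∈ q.primeFactors, (1 + 1 / (p : ℝ))

/-!
Because `λ` is completely multiplicative and `∑_{d ∣ n} λ(d)` is the indicator of the squares,
`∑ λ(n)/n^s = ζ(2s)/ζ(s)`. Writing `c_q(n) = ∑_{e ∣ (q, n)} μ(q/e) e` and summing over the
multiples `n = e m` gives `∑ λ(n) c_q(n)/n² = ζ(4)/ζ(2) · ∑_{e ∣ q} μ(q/e) λ(e)/e`.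
Substituting `e = q/d` and using `λ(q/d) = λ(q) λ(d)` and `μ(d) λ(d) = μ(d)²` turns the
divisor sum into `λ(q)/q · ∑_{d ∣ q squarefree} d = λ(q)/q · ∏_{p ∣ q} (p + 1)`, which is
`λ(q) K(q) ψ(q)/q²`.
-/

open scoped LSeries.notation ArithmeticFunction.zeta ArithmeticFunction.Moebius
  ArithmeticFunction.Omega

theorem Nat.Coprime.isSquare_mul_iff {m n : ℕ} (h : m.Coprime n) :
    IsSquare (m * n) ↔ IsSquare m ∧ IsSquare n := by
  refine ⟨fun ⟨c, hc⟩ => ?_, fun ⟨hm, hn⟩ => hm.mul hn⟩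
  have hc' : m * n = c ^ 2 := hc.trans (sq c).symm
  obtain ⟨a, ha⟩ := exists_eq_pow_of_mul_eq_pow (Nat.isUnit_iff.mpr h) hc'
  obtain ⟨b, hb⟩ := exists_eq_pow_of_mul_eq_pow (Nat.isUnit_iff.mpr h.symm)
    ((mul_comm n m).trans hc')
  exact ⟨⟨a, ha.trans (sq a)⟩, ⟨b, hb.trans (sq b)⟩⟩

theorem Nat.Prime.isSquare_pow_iff {p k : ℕ} (hp : p.Prime) : IsSquare (p ^ k) ↔ Even k := by
  refine ⟨fun ⟨c, hc⟩ => ?_, fun hk => hk.isSquare_pow p⟩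
  have hc0 : c ≠ 0 := by
    rintro rfl
    exact pow_ne_zero k hp.ne_zero (hc.trans (mul_zero 0))
  have hΩ := congrArg ArithmeticFunction.cardFactors hc
  rw [ArithmeticFunction.cardFactors_apply_prime_pow hp,
    ArithmeticFunction.cardFactors_mul hc0 hc0] at hΩ
  exact ⟨_, hΩ⟩

theorem Nat.sum_divisors_filter_squarefree_eq_prod_add_one {R : Type*} [CommSemiring R] {n : ℕ}
    (hn : n ≠ 0) :
    ∑ d ∈ n.divisors with Squarefree d, (d : R) = ∏ p ∈ n.primeFactors, ((p : R) + 1) := by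
  rw [Nat.sum_divisors_filter_squarefree hn, Nat.factors_eq, List.toFinset_coe,
    Nat.toFinset_factors, prod_add]
  refine sum_congr rfl fun t _ => ?_
  rw [prod_const_one, mul_one, Finset.prod, Nat.cast_multiset_prod]

namespace ArithmeticFunction

def squareIndicator (R : Type*) [Zero R] [One R] : ArithmeticFunction R :=
  ⟨fun n => if n ≠ 0 ∧ IsSquare n then 1 else 0, by simp⟩

variable {R : Type*}

theorem squareIndicator_apply [Zero R] [One R] {n : ℕ} (hn : n ≠ 0) :
    squareIndicator R n = if IsSquare n then 1 else 0 := by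
  simp [squareIndicator, hn]

theorem isMultiplicative_squareIndicator [MonoidWithZero R] :
    (squareIndicator R).IsMultiplicative := by
  rw [IsMultiplicative.iff_ne_zero]
  refine ⟨by simp [squareIndicator_apply], fun {m n} hm hn hmn => ?_⟩
  simp only [squareIndicator_apply hm, squareIndicator_apply hn,
    squareIndicator_apply (mul_ne_zero hm hn), hmn.isSquare_mul_iff, ite_zero_mul_ite_zero, mul_one]

theorem coe_liouville_mul_coe_zeta [CommRing R] :
    (liouville * ζ : ArithmeticFunction R) = squareIndicator R := by
  have hmul := isMultiplicative_liouville.intCast.mul (R := R) isMultiplicative_zeta.natCast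
  refine (hmul.eq_iff_eq_on_prime_powers _ _ isMultiplicative_squareIndicator).mpr
    fun p k hp => ?_
  have hpow (i : ℕ) : p ^ i ≠ 0 := pow_ne_zero i hp.ne_zero
  simp only [coe_mul_zeta_apply, Nat.sum_divisors_prime_pow hp, intCoe_apply,
    liouville_apply (hpow _), cardFactors_apply_prime_pow hp, Int.cast_pow, Int.cast_neg,
    Int.cast_one, neg_one_geom_sum, squareIndicator_apply (hpow k), hp.isSquare_pow_iff,
    Nat.even_add_one, ite_not]

theorem LSeriesHasSum_squareIndicator {s : ℂ} (hs : 1 / 2 < s.re) :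
    LSeriesHasSum ↗(squareIndicator ℂ) s (riemannZeta (2 * s)) := by
  have hsq : Function.Injective fun m : ℕ => m ^ 2 := Nat.pow_left_injective two_ne_zero
  have h2s : 1 < (2 * s).re := by
    simp only [Complex.mul_re, Complex.re_ofNat, Complex.im_ofNat, zero_mul, sub_zero]
    linarith
  refine (hsq.hasSum_iff fun n hn => ?_).mp ((LSeriesHasSum_one h2s).congr_fun fun m => ?_)
  · rcases eq_or_ne n 0 with rfl | hn0
    · exact LSeries.term_zero _ _
    · rw [LSeries.term_of_ne_zero hn0, squareIndicator_apply hn0,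
        if_neg fun ⟨c, hc⟩ => hn ⟨c, (hc.trans (sq c).symm).symm⟩, zero_div]
  · rcases eq_or_ne m 0 with rfl | hm
    · simp
    have hm2 : m ^ 2 ≠ 0 := pow_ne_zero 2 hm
    rw [Function.comp_apply, LSeries.term_of_ne_zero hm2, LSeries.term_of_ne_zero hm,
      squareIndicator_apply hm2, if_pos (IsSquare.sq m), Pi.one_apply, sq, Nat.cast_mul,
      Complex.natCast_mul_natCast_cpow, ← sq, ← Complex.cpow_nat_mul, Nat.cast_ofNat]

theorem LSeriesHasSum_liouville {s : ℂ} (hs : 1 < s.re) :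
    LSeriesHasSum ↗liouville s (riemannZeta (2 * s) / riemannZeta s) := by
  have hsumm : LSeriesSummable ↗liouville s :=
    LSeriesSummable_of_bounded_of_one_lt_re (m := 1) (fun n hn => by
      simp [liouville_apply hn]) hs
  have hmul := LSeriesHasSum_mul (f := liouville) (g := ζ) (by simpa using hsumm.LSeriesHasSum)
    (by simpa using LSeriesHasSum_zeta hs)
  rw [coe_liouville_mul_coe_zeta] at hmul
  rw [(LSeriesHasSum_squareIndicator (by linarith)).unique hmul,
    mul_div_cancel_right₀ _ (riemannZeta_ne_zero_of_one_lt_re hs)]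
  exact hsumm.LSeriesHasSum

theorem hasSum_liouville_div_sq :
    HasSum (fun n : ℕ => (liouville n : ℝ) / n ^ 2)
      ((Real.pi ^ 4 / 90) / (Real.pi ^ 2 / 6)) := by
  have h := LSeriesHasSum_liouville (s := 2) (by norm_num)
  rw [show (2 : ℂ) * 2 = 4 by norm_num, riemannZeta_four, riemannZeta_two] at h
  refine Complex.hasSum_ofReal.mp ?_
  push_cast
  refine h.congr_fun fun n => ?_
  rcases eq_or_ne n 0 with rfl | hn
  · simp
  · rw [LSeries.term_of_ne_zero hn, ← Complex.cpow_natCast, Nat.cast_ofNat]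

theorem liouville_mul_self {n : ℕ} (hn : n ≠ 0) : liouville n * liouville n = 1 := by
  rw [liouville_apply hn, ← mul_pow, neg_one_mul, neg_neg, one_pow]

theorem liouville_div {d n : ℕ} (hd : d ∣ n) :
    liouville (n / d) = liouville n * liouville d := by
  obtain ⟨k, rfl⟩ := hd
  rcases eq_or_ne d 0 with rfl | hd0
  · simp
  rw [Nat.mul_div_cancel_left k (Nat.pos_of_ne_zero hd0), liouville_apply_mul, mul_right_comm,
    liouville_mul_self hd0, one_mul]

theorem moebius_mul_liouville (n : ℕ) : μ n * liouville n = if Squarefree n then 1 else 0 := by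
  split_ifs with h
  · rw [moebius_apply_of_squarefree h, ← liouville_apply h.ne_zero, liouville_mul_self h.ne_zero]
  · rw [moebius_eq_zero_of_not_squarefree h, zero_mul]

theorem sum_divisors_moebius_mul_liouville_div {K : Type*} [Field K] [CharZero K] {q : ℕ}
    (hq : q ≠ 0) :
    ∑ e ∈ q.divisors, (μ (q / e) : K) * liouville e / e
      = liouville q / q * ∏ p ∈ q.primeFactors, ((p : K) + 1) := by
  rw [← Nat.sum_div_divisors, ← Nat.sum_divisors_filter_squarefree_eq_prod_add_one hq,
    sum_filter, mul_sum]
  refine sum_congr rfl fun d hd => ?_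
  have hdq := Nat.dvd_of_mem_divisors hd
  have hd0 : (d : K) ≠ 0 := Nat.cast_ne_zero.mpr (Nat.pos_of_mem_divisors hd).ne'
  have hsqf := congrArg (Int.cast : ℤ → K) (moebius_mul_liouville d)
  push_cast at hsqf
  rw [Nat.div_div_self hdq hq, liouville_div hdq, Nat.cast_div hdq hd0, Int.cast_mul,
    mul_left_comm, hsqf]
  split_ifs
  · field_simp
  · simp

theorem liouville_div_sq_mul {K : Type*} [Field K] (m n : ℕ) :
    (liouville (m * n) : K) / ((m * n : ℕ) : K) ^ 2
      = liouville m / (m : K) ^ 2 * (liouville n / (n : K) ^ 2) := by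
  rw [liouville_apply_mul, Nat.cast_mul, mul_pow, Int.cast_mul, mul_div_mul_comm]

end ArithmeticFunction

theorem HasSum.ite_dvd {R : Type*} [NonUnitalNonAssocSemiring R] [TopologicalSpace R]
    [IsTopologicalSemiring R] {f : ℕ → R} {a : R} (hf : HasSum f a)
    (hmul : ∀ m n, f (m * n) = f m * f n) {e : ℕ} (he : e ≠ 0) :
    HasSum (fun n => if e ∣ n then f n else 0) (f e * a) := by
  refine ((mul_right_injective₀ he).hasSum_iff fun n hn => if_neg ?_).mp
    ((hf.mul_left (f e)).congr_fun fun m => ?_)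
  · rintro ⟨m, rfl⟩
    exact hn ⟨m, rfl⟩
  · simp [hmul]

theorem HasSum.tendsto_sum_Icc_one {M : Type*} [AddCommMonoid M] [TopologicalSpace M]
    {f : ℕ → M} {a : M} (hf : HasSum f a) (h0 : f 0 = 0) :
    Tendsto (fun x => ∑ n ∈ Icc 1 x, f n) atTop (𝓝 a) := by
  refine (hf.tendsto_sum_nat.comp (tendsto_add_atTop_nat 1)).congr fun x => ?_
  rw [Function.comp_apply, range_eq_Ico, sum_eq_sum_Ico_succ_bot (by omega : 0 < x + 1), h0,
    _root_.zero_add, Nat.zero_add, Ico_add_one_right_eq_Icc]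

theorem ramanujanSum_eq_sum_divisors_filter_dvd {q : ℕ} (hq : q ≠ 0) (n : ℕ) :
    ramanujanSum q n = ∑ e ∈ q.divisors with e ∣ n, μ (q / e) * e := by
  have hgcd : q.gcd n ≠ 0 := (Nat.gcd_pos_of_pos_left n (Nat.pos_of_ne_zero hq)).ne'
  rw [ramanujanSum]
  congr 1
  ext e
  simp only [Nat.mem_divisors, mem_filter, Nat.dvd_gcd_iff, hgcd, hq, ne_eq, not_false_eq_true,
    and_true]

theorem hasSum_mul_ramanujanSum {R : Type*} [CommRing R] [TopologicalSpace R]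
    [IsTopologicalRing R] {f : ℕ → R} {a : R} (hf : HasSum f a)
    (hmul : ∀ m n, f (m * n) = f m * f n) {q : ℕ} (hq : q ≠ 0) :
    HasSum (fun n => f n * ramanujanSum q n) (a * ∑ e ∈ q.divisors, μ (q / e) * e * f e) := by
  have h := hasSum_sum (s := q.divisors) fun e he =>
    (hf.ite_dvd hmul (Nat.pos_of_mem_divisors he).ne').mul_left ((μ (q / e) * e : ℤ) : R)
  have hval : a * ∑ e ∈ q.divisors, μ (q / e) * e * f e
      = ∑ e ∈ q.divisors, ((μ (q / e) * e : ℤ) : R) * (f e * a) := by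
    rw [mul_sum]
    refine sum_congr rfl fun e _ => ?_
    push_cast
    ring
  refine hval ▸ h.congr_fun fun n => ?_
  rw [ramanujanSum_eq_sum_divisors_filter_dvd hq, sum_filter, Int.cast_sum, mul_sum]
  refine sum_congr rfl fun e _ => ?_
  split_ifs
  · exact mul_comm _ _
  · rw [Int.cast_zero, mul_zero, mul_zero]

/-- The conventions differ at `0`: `liouville 0 = 1` but `ArithmeticFunction.liouville 0 = 0`. -/
theorem liouville_eq_arithmeticFunction_liouville {n : ℕ} (hn : n ≠ 0) :
    liouville n = ArithmeticFunction.liouville n :=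
  (ArithmeticFunction.liouville_apply hn).symm

theorem rad_mul_dedekindPsi (q : ℕ) :
    (rad q : ℝ) * dedekindPsi q = q * ∏ p ∈ q.primeFactors, ((p : ℝ) + 1) := by
  rw [rad, dedekindPsi, Nat.cast_prod, mul_left_comm, ← prod_mul_distrib]
  congr 1
  refine prod_congr rfl fun p hp => ?_
  have hp0 : (p : ℝ) ≠ 0 := Nat.cast_ne_zero.mpr (Nat.prime_of_mem_primeFactors hp).ne_zero
  field_simp

theorem sum_divisors_moebius_mul_liouville_div_sq {q : ℕ} (hq : q ≠ 0) :
    ∑ e ∈ q.divisors, (μ (q / e) : ℝ) * e * (ArithmeticFunction.liouville e / e ^ 2)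
      = liouville q * rad q * dedekindPsi q / q ^ 2 := by
  have hq' : (q : ℝ) ≠ 0 := Nat.cast_ne_zero.mpr hq
  calc _ = ∑ e ∈ q.divisors, (μ (q / e) : ℝ) * ArithmeticFunction.liouville e / e := by
        refine sum_congr rfl fun e he => ?_
        have he' : (e : ℝ) ≠ 0 := Nat.cast_ne_zero.mpr (Nat.pos_of_mem_divisors he).ne'
        field_simp
    _ = _ := by
      rw [ArithmeticFunction.sum_divisors_moebius_mul_liouville_div hq, mul_assoc,
        rad_mul_dedekindPsi, liouville_eq_arithmeticFunction_liouville hq]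
      field_simp

theorem dual_rf_liouville_rad_psi (q : ℕ) (hq : 0 < q) :
    Tendsto (fun x : ℕ => ∑ n ∈ Finset.Icc 1 x,
        (liouville n : ℝ) / (n : ℝ) ^ 2 * (ramanujanSum q n : ℝ))
      atTop
      (𝓝 ((Real.pi ^ 4 / 90) / (Real.pi ^ 2 / 6) *
        ((liouville q : ℝ) * (rad q : ℝ) * dedekindPsi q / (q : ℝ) ^ 2))) := by
  have hsum := hasSum_mul_ramanujanSum ArithmeticFunction.hasSum_liouville_div_sq
    ArithmeticFunction.liouville_div_sq_mul hq.ne'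
  rw [sum_divisors_moebius_mul_liouville_div_sq hq.ne'] at hsum
  refine (hsum.tendsto_sum_Icc_one (by simp)).congr fun x => sum_congr rfl fun n hn => ?_
  rw [liouville_eq_arithmeticFunction_liouville (Nat.one_le_iff_ne_zero.mp (mem_Icc.mp hn).1)]
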